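/- For any chain complex C_• of abelian groups, there is an exact sequence 0 → H_k^{(2)}(C_•) → Z/2 ⊗ H_k(C_•) → H_k(C_•; Z/2), where H_k^{(2)}(C_•) = (Z_k ∩ 2C_k)/(2Z_k + (B_k ∩ 2C_k)). -/

import Mathlib

open TensorProduct

section
/- A chain complex of abelian groups around homological position k is shown as
`A --f--> B --g--> C` with g ∘ f = 0; its homology at the middle spot is
H = ker g / im f. -/
variable {A B C : Type} [AddCommGroup A] [AddCommGroup B] [AddCommGroup C]

/-- Multiplication by 2. -/
def dbl (B : Type) [AddCommGroup B] : B →+ B :=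
  AddMonoidHom.mk' (fun b => (2 : ℤ) • b) (fun a b => smul_add 2 a b)

variable (f : A →+ B) (g : B →+ C)

/-- H_k(C•): cycles modulo boundaries. -/
abbrev Hmid := ↥g.ker ⧸ (f.range.addSubgroupOf g.ker)

/-- H_k^{(2)}(C•) = (Z_k ∩ 2C_k) / (2Z_k + (B_k ∩ 2C_k)). -/
abbrev Htwo := ↥(g.ker ⊓ (dbl B).range) ⧸
  (((AddSubgroup.map (dbl B) g.ker) ⊔ (f.range ⊓ (dbl B).range)).addSubgroupOf
    (g.ker ⊓ (dbl B).range))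

/-- The complex with ℤ/2 coefficients: ℤ/2 ⊗ C•. -/
noncomputable abbrev ftwo : (ZMod 2) ⊗[ℤ] A →ₗ[ℤ] (ZMod 2) ⊗[ℤ] B :=
  LinearMap.lTensor (ZMod 2) f.toIntLinearMap
noncomputable abbrev gtwo : (ZMod 2) ⊗[ℤ] B →ₗ[ℤ] (ZMod 2) ⊗[ℤ] C :=
  LinearMap.lTensor (ZMod 2) g.toIntLinearMap

/-- H_k(C•; ℤ/2): homology of the complex with ℤ/2 coefficients. -/
abbrev Hmodtwo := ↥(LinearMap.ker (gtwo g)) ⧸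
  ((LinearMap.range (ftwo f)).comap (LinearMap.ker (gtwo g)).subtype)

/-- Defining property of the map H_k^{(2)} → ℤ/2 ⊗ H_k: the class of a cycle
lying in 2C_k is sent to 1 tensored with its homology class. -/
def PhiProp (Φ : Htwo f g →+ (ZMod 2) ⊗[ℤ] (Hmid f g)) : Prop :=
  ∀ (b : B) (hb1 : b ∈ g.ker) (hb2 : b ∈ (dbl B).range),
    Φ (QuotientAddGroup.mk ⟨b, AddSubgroup.mem_inf.mpr ⟨hb1, hb2⟩⟩) =
      (1 : ZMod 2) ⊗ₜ[ℤ] (QuotientAddGroup.mk ⟨b, hb1⟩ : Hmid f g)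

/-- Defining property of the natural map ℤ/2 ⊗ H_k → H_k(C•; ℤ/2):
1 ⊗ [z] ↦ [1 ⊗ z]. -/
def PsiProp (Ψ : (ZMod 2) ⊗[ℤ] (Hmid f g) →+ Hmodtwo f g) : Prop :=
  ∀ (b : B) (hb : b ∈ g.ker) (w : (ZMod 2) ⊗[ℤ] B) (hw : w ∈ LinearMap.ker (gtwo g)),
    w = (1 : ZMod 2) ⊗ₜ[ℤ] b →
    Ψ ((1 : ZMod 2) ⊗ₜ[ℤ] (QuotientAddGroup.mk ⟨b, hb⟩ : Hmid f g)) =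
      Submodule.Quotient.mk ⟨w, hw⟩

end

/-! Everything rests on `ℤ/2 ⊗ M ≅ M/2M`, `1 ⊗ m ↦ [m]`. Write `Z`, `B`, `D` for the cycles,
the boundaries and `2C_k`. Then `ℤ/2 ⊗ H_k = Z/(2Z + B)`, so the first map is `[x] ↦ [x]` on
`Z ∩ D`, with kernel `(2Z + B) ∩ D = 2Z + (B ∩ D)` by the modular law (as `2Z ⊆ D`). The class
`[1 ⊗ z]` of a cycle vanishes in `H_k(C; ℤ/2)` iff `z ∈ B + D`; writing `z = b + d`, `d` is again
a cycle, lies in `Z ∩ D`, and `[z] = [d]`. -/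

namespace ZModTensor

variable {n : ℕ} {M N : Type*} [AddCommGroup M] [AddCommGroup N]

theorem exists_one_tmul_eq (w : ZMod n ⊗[ℤ] M) : ∃ m : M, (1 : ZMod n) ⊗ₜ[ℤ] m = w := by
  induction w using TensorProduct.induction_on with
  | zero => exact ⟨0, tmul_zero _ _⟩
  | tmul x m =>
    refine ⟨(x.cast : ℤ) • m, ?_⟩
    rw [← smul_tmul, zsmul_eq_mul, mul_one, ZMod.intCast_zmod_cast]
  | add v w hv hw =>
    obtain ⟨m, rfl⟩ := hv
    obtain ⟨m', rfl⟩ := hw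
    exact ⟨m + m', tmul_add _ _ _⟩

theorem nsmul_eq_zero (w : ZMod n ⊗[ℤ] M) : n • w = 0 := by
  obtain ⟨m, rfl⟩ := exists_one_tmul_eq w
  rw [smul_tmul', nsmul_eq_mul, mul_one, ZMod.natCast_self, zero_tmul]

noncomputable def lift (hN : ∀ y : N, n • y = 0) (φ : M →+ N) : ZMod n ⊗[ℤ] M →+ N :=
  letI := AddCommGroup.zmodModule hN
  (φ.toIntLinearMap.liftBaseChange (ZMod n)).toAddMonoidHom

theorem lift_one_tmul (hN : ∀ y : N, n • y = 0) (φ : M →+ N) (m : M) :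
    lift hN φ ((1 : ZMod n) ⊗ₜ[ℤ] m) = φ m :=
  let := AddCommGroup.zmodModule hN
  LinearMap.liftBaseChange_one_tmul (ZMod n) φ.toIntLinearMap m

theorem one_tmul_eq_zero_iff (m : M) : (1 : ZMod n) ⊗ₜ[ℤ] m = 0 ↔ ∃ u : M, n • u = m := by
  refine ⟨fun h => ?_, ?_⟩
  · have hquot : ∀ y : M ⧸ (nsmulAddMonoidHom n : M →+ M).range, n • y = 0 := by
      rintro ⟨y⟩
      exact (QuotientAddGroup.eq_zero_iff _).2 ⟨y, rfl⟩
    simpa [lift_one_tmul] using congrArg (lift hquot (QuotientAddGroup.mk' _)) h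
  · rintro ⟨u, rfl⟩
    rw [tmul_smul, nsmul_eq_zero]

end ZModTensor

theorem dbl_apply {M : Type} [AddCommGroup M] (m : M) : dbl M m = 2 • m :=
  (two_zsmul m).trans (two_nsmul m).symm

theorem one_tmul_eq_zero_iff_mem_range_dbl {M : Type} [AddCommGroup M] (m : M) :
    (1 : ZMod 2) ⊗ₜ[ℤ] m = 0 ↔ m ∈ (dbl M).range := by
  rw [ZModTensor.one_tmul_eq_zero_iff]
  exact exists_congr fun u => by rw [dbl_apply]

section

variable {A B C : Type} [AddCommGroup A] [AddCommGroup B] [AddCommGroup C] (f : A →+ B) (g : B →+ C)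

theorem ftwo_tmul (x : ZMod 2) (a : A) : ftwo f (x ⊗ₜ a) = x ⊗ₜ f a := rfl

theorem gtwo_tmul (x : ZMod 2) (b : B) : gtwo g (x ⊗ₜ b) = x ⊗ₜ g b := rfl

theorem one_tmul_mk_eq_zero_iff (z : g.ker) :
    (1 : ZMod 2) ⊗ₜ[ℤ] (QuotientAddGroup.mk z : Hmid f g) = 0 ↔
      (z : B) ∈ AddSubgroup.map (dbl B) g.ker ⊔ f.range := by
  rw [ZModTensor.one_tmul_eq_zero_iff, AddSubgroup.mem_sup]
  constructor
  · rintro ⟨u, hu⟩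
    obtain ⟨u, rfl⟩ := QuotientAddGroup.mk_surjective u
    rw [← QuotientAddGroup.mk_nsmul, QuotientAddGroup.eq, AddSubgroup.mem_addSubgroupOf] at hu
    refine ⟨dbl B u, AddSubgroup.mem_map_of_mem _ u.2, _, hu, ?_⟩
    rw [dbl_apply, AddSubgroup.coe_add, AddSubgroup.coe_neg, AddSubgroup.coe_nsmul,
      add_neg_cancel_left]
  · rintro ⟨_, ⟨u, hu, rfl⟩, b, hb, hz⟩
    refine ⟨QuotientAddGroup.mk ⟨u, hu⟩, ?_⟩
    rw [← QuotientAddGroup.mk_nsmul, QuotientAddGroup.eq, AddSubgroup.mem_addSubgroupOf]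
    convert hb using 1
    rw [AddSubgroup.coe_add, AddSubgroup.coe_neg, AddSubgroup.coe_nsmul, ← hz, dbl_apply,
      neg_add_cancel_left]

theorem one_tmul_mem_ker_gtwo (z : g.ker) :
    (1 : ZMod 2) ⊗ₜ[ℤ] (z : B) ∈ LinearMap.ker (gtwo g) := by
  rw [LinearMap.mem_ker, gtwo_tmul, z.2, tmul_zero]

theorem Hmodtwo.mk_one_tmul_eq_zero_iff (z : B)
    (hz : (1 : ZMod 2) ⊗ₜ[ℤ] z ∈ LinearMap.ker (gtwo g)) :
    (Submodule.Quotient.mk ⟨1 ⊗ₜ z, hz⟩ : Hmodtwo f g) = 0 ↔ z ∈ f.range ⊔ (dbl B).range := by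
  rw [Submodule.Quotient.mk_eq_zero, Submodule.mem_comap, Submodule.subtype_apply,
    LinearMap.mem_range, AddSubgroup.mem_sup]
  constructor
  · rintro ⟨t, ht⟩
    obtain ⟨a, rfl⟩ := ZModTensor.exists_one_tmul_eq t
    rw [ftwo_tmul, Submodule.coe_mk] at ht
    have hd : (1 : ZMod 2) ⊗ₜ[ℤ] (z - f a) = 0 := by rw [tmul_sub, ← ht, sub_self]
    exact ⟨f a, ⟨a, rfl⟩, z - f a, (one_tmul_eq_zero_iff_mem_range_dbl _).1 hd,
      add_sub_cancel _ _⟩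
  · rintro ⟨_, ⟨a, rfl⟩, d, hd, rfl⟩
    refine ⟨1 ⊗ₜ a, ?_⟩
    rw [ftwo_tmul, Submodule.coe_mk, tmul_add, (one_tmul_eq_zero_iff_mem_range_dbl d).2 hd,
      add_zero]

theorem Hmodtwo.two_nsmul_eq_zero (q : Hmodtwo f g) : 2 • q = 0 := by
  obtain ⟨w, rfl⟩ := Submodule.Quotient.mk_surjective _ q
  have hw : 2 • w = 0 := Subtype.ext (ZModTensor.nsmul_eq_zero (w : ZMod 2 ⊗[ℤ] B))
  rw [← Submodule.Quotient.mk_smul, hw, Submodule.Quotient.mk_zero]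

noncomputable def htwoToTensorHmid : Htwo f g →+ ZMod 2 ⊗[ℤ] Hmid f g :=
  QuotientAddGroup.lift _
    ((TensorProduct.mk ℤ (ZMod 2) (Hmid f g) 1).toAddMonoidHom.comp
      ((QuotientAddGroup.mk' _).comp (AddSubgroup.inclusion inf_le_left)))
    fun _ hx => (one_tmul_mk_eq_zero_iff f g _).2 <|
      sup_le_sup_left (inf_le_left : f.range ⊓ (dbl B).range ≤ f.range) _
        (AddSubgroup.mem_addSubgroupOf.1 hx)

theorem phiProp_htwoToTensorHmid : PhiProp f g (htwoToTensorHmid f g) :=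
  fun _ _ _ => rfl

noncomputable def cycleReduction : g.ker →+ LinearMap.ker (gtwo g) :=
  AddMonoidHom.mk' (fun z => ⟨1 ⊗ₜ z, one_tmul_mem_ker_gtwo g z⟩)
    fun _ _ => Subtype.ext (tmul_add _ _ _)

noncomputable def tensorHmidToHmodtwo : ZMod 2 ⊗[ℤ] Hmid f g →+ Hmodtwo f g :=
  ZModTensor.lift (Hmodtwo.two_nsmul_eq_zero f g) <|
    QuotientAddGroup.lift _ ((Submodule.mkQ _).toAddMonoidHom.comp (cycleReduction g))
      fun z hz => (Hmodtwo.mk_one_tmul_eq_zero_iff f g z _).2 <|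
        AddSubgroup.mem_sup_left (AddSubgroup.mem_addSubgroupOf.1 hz)

theorem psiProp_tensorHmidToHmodtwo : PsiProp f g (tensorHmidToHmodtwo f g) := by
  rintro _ _ _ _ rfl
  exact ZModTensor.lift_one_tmul _ _ _

variable {f g}

theorem PhiProp.injective {Φ : Htwo f g →+ ZMod 2 ⊗[ℤ] Hmid f g} (hΦ : PhiProp f g Φ) :
    Function.Injective Φ := by
  rw [injective_iff_map_eq_zero]
  intro x h
  induction x using QuotientAddGroup.induction_on with | H x =>
  obtain ⟨x, hx⟩ := x
  obtain ⟨hxZ, hxD⟩ := AddSubgroup.mem_inf.1 hx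
  have hx2 : x ∈ AddSubgroup.map (dbl B) g.ker ⊔ f.range :=
    (one_tmul_mk_eq_zero_iff f g ⟨x, hxZ⟩).1 (hΦ x hxZ hxD ▸ h)
  refine (QuotientAddGroup.eq_zero_iff _).2 (AddSubgroup.mem_addSubgroupOf.2 ?_)
  rw [← sup_inf_assoc_of_le _ (AddSubgroup.map_le_range _ _)]
  exact ⟨hx2, hxD⟩

theorem PsiProp.apply_eq_zero_of_mem_range {Φ : Htwo f g →+ ZMod 2 ⊗[ℤ] Hmid f g}
    {Ψ : ZMod 2 ⊗[ℤ] Hmid f g →+ Hmodtwo f g} (hΨ : PsiProp f g Ψ) (hΦ : PhiProp f g Φ)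
    {y : ZMod 2 ⊗[ℤ] Hmid f g} (hy : y ∈ Φ.range) : Ψ y = 0 := by
  obtain ⟨x, rfl⟩ := hy
  induction x using QuotientAddGroup.induction_on with | H x =>
  obtain ⟨x, hx⟩ := x
  obtain ⟨hxZ, hxD⟩ := AddSubgroup.mem_inf.1 hx
  rw [hΦ x hxZ hxD, hΨ x hxZ _ (one_tmul_mem_ker_gtwo g ⟨x, hxZ⟩) rfl,
    Hmodtwo.mk_one_tmul_eq_zero_iff]
  exact AddSubgroup.mem_sup_right hxD

theorem PsiProp.mem_range_of_apply_eq_zero (hgf : ∀ a : A, g (f a) = 0)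
    {Φ : Htwo f g →+ ZMod 2 ⊗[ℤ] Hmid f g}
    {Ψ : ZMod 2 ⊗[ℤ] Hmid f g →+ Hmodtwo f g} (hΨ : PsiProp f g Ψ) (hΦ : PhiProp f g Φ)
    {y : ZMod 2 ⊗[ℤ] Hmid f g} (hy : Ψ y = 0) : y ∈ Φ.range := by
  obtain ⟨z, rfl⟩ := ZModTensor.exists_one_tmul_eq y
  induction z using QuotientAddGroup.induction_on with | H z =>
  obtain ⟨z, hzZ⟩ := z
  rw [hΨ z hzZ _ (one_tmul_mem_ker_gtwo g ⟨z, hzZ⟩) rfl, Hmodtwo.mk_one_tmul_eq_zero_iff,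
    AddSubgroup.mem_sup] at hy
  obtain ⟨_, ⟨a, rfl⟩, d, hdD, rfl⟩ := hy
  have hdZ : d ∈ g.ker := by
    rwa [AddMonoidHom.mem_ker, map_add, hgf, zero_add] at hzZ
  refine ⟨QuotientAddGroup.mk ⟨d, AddSubgroup.mem_inf.2 ⟨hdZ, hdD⟩⟩, ?_⟩
  rw [hΦ d hdZ hdD]
  congr 1
  rw [QuotientAddGroup.eq, AddSubgroup.mem_addSubgroupOf]
  exact ⟨a, by push_cast; abel⟩

end

/-- For any chain complex of abelian groups (displayed around
one homological position as A → B → C), there is an exact sequence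
0 → H_k^{(2)}(C•) → ℤ/2 ⊗ H_k(C•) → H_k(C•; ℤ/2): both maps exist, the first is
injective, and the image of the first equals the kernel of the second. -/
theorem exact_sequence_Htwo {A B C : Type}
    [AddCommGroup A] [AddCommGroup B] [AddCommGroup C]
    (f : A →+ B) (g : B →+ C) (hgf : ∀ a : A, g (f a) = 0) :
    (∃ Φ : Htwo f g →+ (ZMod 2) ⊗[ℤ] (Hmid f g), PhiProp f g Φ) ∧
    (∃ Ψ : (ZMod 2) ⊗[ℤ] (Hmid f g) →+ Hmodtwo f g, PsiProp f g Ψ) ∧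
    (∀ (Φ : Htwo f g →+ (ZMod 2) ⊗[ℤ] (Hmid f g))
       (Ψ : (ZMod 2) ⊗[ℤ] (Hmid f g) →+ Hmodtwo f g),
      PhiProp f g Φ → PsiProp f g Ψ →
        Function.Injective Φ ∧ ∀ y, Ψ y = 0 ↔ y ∈ Φ.range) :=
  ⟨⟨_, phiProp_htwoToTensorHmid f g⟩, ⟨_, psiProp_tensorHmidToHmodtwo f g⟩,
    fun _ _ hΦ hΨ => ⟨hΦ.injective, fun _ =>
      ⟨hΨ.mem_range_of_apply_eq_zero hgf hΦ, hΨ.apply_eq_zero_of_mem_range hΦ⟩⟩⟩
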